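/- For the 2-approximation of Metric TSP via doubled spanning trees: in a complete weighted graph on n ≥ 2 vertices whose edge weights satisfy the triangle inequality and are nonnegative and symmetric, there exists a Hamiltonian cycle whose total weight is at most twice the weight of a minimum spanning tree, and hence at most twice the weight of an optimal TSP tour. -/

import Mathlib

open scoped Classical

/-- The weight of the Hamiltonian cycle visiting `σ 0, σ 1, …, σ (n-1), σ 0` in order. -/
noncomputable def cycleWeight {V : Type*} (w : V → V → ℝ) {n : ℕ} (hn : 0 < n)
    (σ : Fin n → V) : ℝ :=
  ∑ i : Fin n, w (σ i) (σ ⟨(i.val + 1) % n, Nat.mod_lt _ hn⟩)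

/-- The total weight of the edges of a graph `T` on a finite vertex set. -/
noncomputable def graphWeight {V : Type*} [Fintype V] (w : V → V → ℝ)
    (T : SimpleGraph V) : ℝ :=
  (∑ u : V, ∑ v : V, if T.Adj u v then w u v else 0) / 2

open SimpleGraph Finset Function

section Helpers

variable {V : Type*}

lemma graphWeight_nonneg [Fintype V] {w : V → V → ℝ} (hw : ∀ u v, 0 ≤ w u v)
    (T : SimpleGraph V) : 0 ≤ graphWeight w T := by
  apply div_nonneg _ (by norm_num)
  refine Finset.sum_nonneg fun u _ => Finset.sum_nonneg fun v _ => ?_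
  split
  · exact hw u v
  · exact le_rfl

lemma cycleWeight_eq {w : V → V → ℝ} {n : ℕ} [NeZero n] (hn : 0 < n) (σ : Fin n → V) :
    cycleWeight w hn σ = ∑ i : Fin n, w (σ i) (σ (i + 1)) := by
  refine Finset.sum_congr rfl fun i _ => ?_
  congr 2
  ext
  simp only [Fin.add_def, Fin.val_one', Nat.add_mod_mod]

lemma cycleWeight_rotate {w : V → V → ℝ} {n : ℕ} [NeZero n] (hn : 0 < n)
    (σ : Fin n → V) (c : Fin n) :
    cycleWeight w hn (fun i => σ (i + c)) = cycleWeight w hn σ := by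
  rw [cycleWeight_eq hn, cycleWeight_eq hn]
  refine Fintype.sum_equiv (Equiv.addRight c) _ _ fun i => ?_
  simp only [Equiv.coe_addRight]
  congr 2
  exact add_right_comm i 1 c

lemma sum_split [Fintype V] (v : V) (F : V → ℝ) :
    ∑ x : V, F x = F v + ∑ x : {x : V // x ≠ v}, F x.val := by
  rw [← Finset.sum_subtype (Finset.univ.erase v) (by simp) F]
  exact (Finset.add_sum_erase _ F (Finset.mem_univ v)).symm

end Helpers
section Chunk2

variable {V : Type*}

lemma reachable_invariant {G : SimpleGraph V} (P : V → Prop)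
    (h : ∀ a b, G.Adj a b → (P a ↔ P b)) {x y : V} (hr : G.Reachable x y) : P x ↔ P y := by
  obtain ⟨p⟩ := hr
  induction p with
  | nil => exact Iff.rfl
  | cons ha q ih => exact (h _ _ ha).trans ih

lemma pathGraph_isAcyclic (n : ℕ) : (SimpleGraph.pathGraph n).IsAcyclic := by
  rw [isAcyclic_iff_forall_adj_isBridge]
  have key : ∀ u v : Fin n, u.val + 1 = v.val → (pathGraph n).IsBridge s(u, v) := by
    intro u v huv
    rw [isBridge_iff]
    intro hr
    have hinv := reachable_invariant (fun x : Fin n => x.val ≤ u.val) ?_ hr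
    · simp only [le_refl, true_iff] at hinv
      omega
    · intro a b hab
      simp only [deleteEdges, sdiff_adj, fromEdgeSet_adj, Set.mem_singleton_iff, pathGraph_adj] at hab
      obtain ⟨hab1, hab2⟩ := hab
      rw [not_and_or] at hab2
      have hne : a ≠ b := by
        intro h; subst h; omega
      have h2 : ¬(s(a, b) = s(u, v)) := by tauto
      rw [Sym2.eq_iff] at h2
      push_neg at h2
      simp only [Fin.ext_iff] at h2 hne ⊢
      obtain ⟨h3, h4⟩ := h2
      constructor <;> intro <;> omega
  intro u v huv
  rw [pathGraph_adj] at huv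
  rcases huv with h | h
  · exact key u v h
  · rw [Sym2.eq_swap]
    exact key v u h

end Chunk2
section Chunk3

variable {V : Type*}

lemma exists_tree_le_tour [Fintype V] {n : ℕ} (hn : 2 ≤ n) (hcard : Fintype.card V = n)
    (h0 : 0 < n) (w : V → V → ℝ) (hnonneg : ∀ u v, 0 ≤ w u v)
    (hsymm : ∀ u v, w u v = w v u) (τ : Fin n → V) (hτ : Function.Bijective τ) :
    ∃ T : SimpleGraph V, T.IsTree ∧ graphWeight w T ≤ cycleWeight w h0 τ := by
  haveI : NeZero n := ⟨by omega⟩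
  set e : Fin n ≃ V := Equiv.ofBijective τ hτ with he
  refine ⟨(pathGraph n).map e.toEmbedding, ⟨?_, ?_⟩, ?_⟩
  · -- connected
    refine (Iso.map e (pathGraph n)).connected_iff.mp ?_
    obtain ⟨m, rfl⟩ : ∃ m, n = m + 1 := ⟨n - 1, by omega⟩
    exact pathGraph_connected m
  · -- acyclic
    intro x c hc
    have hinj : Function.Injective (Iso.map e (pathGraph n)).symm.toHom :=
      (Iso.map e (pathGraph n)).symm.injective
    have := (SimpleGraph.Walk.map_isCycle_iff_of_injective hinj).mpr hc
    exact pathGraph_isAcyclic n _ this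
  · -- weight
    set P : ℝ := ∑ i : Fin n,
      (if h : i.val + 1 < n then w (τ i) (τ ⟨i.val + 1, h⟩) else 0) with hP
    have hA : ∀ i : Fin n, (∑ j : Fin n,
        if i.val + 1 = j.val then w (τ i) (τ j) else 0) =
        (if h : i.val + 1 < n then w (τ i) (τ ⟨i.val + 1, h⟩) else 0) := by
      intro i
      by_cases h : i.val + 1 < n
      · rw [dif_pos h]
        rw [Finset.sum_eq_single ⟨i.val + 1, h⟩]
        · rw [if_pos rfl]
        · intro b _ hb
          exact if_neg fun hc => hb (Fin.ext hc.symm)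
        · intro hmem; exact absurd (Finset.mem_univ _) hmem
      · rw [dif_neg h]
        refine Finset.sum_eq_zero fun j _ => ?_
        rw [if_neg]
        have := j.isLt
        omega
    have hsplit : ∀ i j : Fin n, (if (pathGraph n).Adj i j then w (τ i) (τ j) else 0) =
        (if i.val + 1 = j.val then w (τ i) (τ j) else 0)
        + (if j.val + 1 = i.val then w (τ i) (τ j) else 0) := by
      intro i j
      rw [pathGraph_adj]
      by_cases h1 : i.val + 1 = j.val <;> by_cases h2 : j.val + 1 = i.val <;>
        simp [h1, h2] <;> omega
    have hdouble : (∑ u : V, ∑ v : V, if ((pathGraph n).map e.toEmbedding).Adj u v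
        then w u v else 0) = 2 * P := by
      rw [← Equiv.sum_comp e (fun u => ∑ v : V, if ((pathGraph n).map e.toEmbedding).Adj u v
        then w u v else 0)]
      have : ∀ i : Fin n, (∑ v : V, if ((pathGraph n).map e.toEmbedding).Adj (e i) v
          then w (e i) v else 0) = ∑ j : Fin n, if (pathGraph n).Adj i j
          then w (τ i) (τ j) else 0 := by
        intro i
        rw [← Equiv.sum_comp e (fun v => if ((pathGraph n).map e.toEmbedding).Adj (e i) v
          then w (e i) v else 0)]
        refine Finset.sum_congr rfl fun j _ => ?_
        have : ((pathGraph n).map e.toEmbedding).Adj (e i) (e j) ↔ (pathGraph n).Adj i j :=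
          SimpleGraph.map_adj_apply
        rw [if_congr this rfl rfl]
        rfl
      rw [Finset.sum_congr rfl fun i _ => this i]
      have hswap : (∑ i : Fin n, ∑ j : Fin n, if j.val + 1 = i.val
          then w (τ i) (τ j) else 0) = P := by
        rw [Finset.sum_comm]
        rw [hP]
        refine Finset.sum_congr rfl fun j _ => ?_
        have := hA j
        calc (∑ i : Fin n, if j.val + 1 = i.val then w (τ i) (τ j) else 0)
            = ∑ i : Fin n, if j.val + 1 = i.val then w (τ j) (τ i) else 0 := by
              refine Finset.sum_congr rfl fun i _ => ?_
              rw [if_congr Iff.rfl (hsymm (τ i) (τ j)) rfl]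
          _ = _ := hA j
      calc (∑ i : Fin n, ∑ j : Fin n, if (pathGraph n).Adj i j then w (τ i) (τ j) else 0)
          = ∑ i : Fin n, ((∑ j : Fin n, if i.val + 1 = j.val then w (τ i) (τ j) else 0)
            + ∑ j : Fin n, if j.val + 1 = i.val then w (τ i) (τ j) else 0) := by
            refine Finset.sum_congr rfl fun i _ => ?_
            rw [← Finset.sum_add_distrib]
            exact Finset.sum_congr rfl fun j _ => hsplit i j
        _ = P + P := by rw [Finset.sum_add_distrib]; rw [Finset.sum_congr rfl fun i _ => hA i, hswap]
        _ = 2 * P := by ring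
    have hgw : graphWeight w ((pathGraph n).map e.toEmbedding) = P := by
      have hconv : (graphWeight w ((pathGraph n).map e.toEmbedding)) =
          (∑ u : V, ∑ v : V, if ((pathGraph n).map e.toEmbedding).Adj u v
            then w u v else 0) / 2 := by
        unfold graphWeight
        congr 1
        exact Finset.sum_congr rfl fun u _ => Finset.sum_congr rfl fun v _ =>
          ite_congr rfl (fun _ => rfl) fun _ => rfl
      rw [hconv, hdouble]
      ring
    rw [hgw]
    unfold cycleWeight
    refine Finset.sum_le_sum fun i _ => ?_
    by_cases h : i.val + 1 < n
    · rw [dif_pos h]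
      apply le_of_eq
      have heq : (⟨(i.val + 1) % n, Nat.mod_lt _ h0⟩ : Fin n) = ⟨i.val + 1, h⟩ :=
        Fin.ext (Nat.mod_eq_of_lt h)
      rw [heq]
    · rw [dif_neg h]
      exact hnonneg _ _

end Chunk3
section Chunk4

variable {V : Type*}

lemma exists_leaf [Fintype V] (T : SimpleGraph V) (hT : T.IsTree)
    (h2 : 2 ≤ Fintype.card V) : ∃ v u, T.Adj v u ∧ ∀ a, T.Adj v a → a = u := by
  have hdeg1 : ∀ v : V, 1 ≤ T.degree v := by
    intro v
    obtain ⟨y, hy⟩ := Fintype.exists_ne_of_one_lt_card (by omega) v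
    obtain ⟨p⟩ := hT.isConnected.preconnected v y
    have hnp : ¬p.Nil := SimpleGraph.Walk.not_nil_of_ne (Ne.symm hy)
    exact (T.degree_pos_iff_exists_adj v).mpr ⟨_, p.adj_snd hnp⟩
  have hedges : ∑ v : V, T.degree v = 2 * (Fintype.card V - 1) := by
    rw [SimpleGraph.sum_degrees_eq_twice_card_edges]
    have := hT.card_edgeFinset
    omega
  have hex : ∃ v : V, T.degree v = 1 := by
    by_contra hcon
    push_neg at hcon
    have h2d : ∀ v : V, 2 ≤ T.degree v := fun v => by
      have := hdeg1 v; have := hcon v; omega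
    have hle := Finset.card_nsmul_le_sum Finset.univ (fun v => T.degree v) 2
      (fun v _ => h2d v)
    simp only [Finset.card_univ, smul_eq_mul] at hle
    rw [hedges] at hle
    omega
  obtain ⟨v, hv⟩ := hex
  obtain ⟨u, hu⟩ := Finset.card_eq_one.mp hv
  refine ⟨v, u, ?_, ?_⟩
  · rw [← SimpleGraph.mem_neighborFinset, hu]
    exact Finset.mem_singleton_self u
  · intro a ha
    rw [← SimpleGraph.mem_neighborFinset, hu, Finset.mem_singleton] at ha
    exact ha

lemma not_mem_support_of_unique_nbr {T : SimpleGraph V} {v u : V}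
    (huniq : ∀ a, T.Adj v a → a = u) {x y : V} (hx : x ≠ v) (hy : y ≠ v)
    (p : T.Walk x y) (hp : p.IsPath) : v ∉ p.support := by
  classical
  intro hmem
  set p₁ := p.takeUntil v hmem with hp₁def
  set p₂ := p.dropUntil v hmem with hp₂def
  have hspec : p = p₁.append p₂ := (p.take_spec hmem).symm
  have hp₁ : p₁.IsPath := hp.takeUntil hmem
  have hp₂ : p₂.IsPath := hp.dropUntil hmem
  have h1n : ¬p₁.reverse.Nil := SimpleGraph.Walk.not_nil_of_ne (Ne.symm hx)
  have h2n : ¬p₂.Nil := SimpleGraph.Walk.not_nil_of_ne (Ne.symm hy)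
  have hu1 : p₁.reverse.getVert 1 = u := huniq _ (p₁.reverse.adj_snd h1n)
  have hu2 : p₂.getVert 1 = u := huniq _ (p₂.adj_snd h2n)
  have hmem1 : u ∈ p₁.support := by
    rw [← hu1]
    have : p₁.reverse.getVert 1 ∈ p₁.reverse.support := by
      rw [SimpleGraph.Walk.mem_support_iff_exists_getVert]
      refine ⟨1, rfl, ?_⟩
      rw [SimpleGraph.Walk.length_reverse]
      have := SimpleGraph.Walk.not_nil_iff_lt_length.mp h1n
      rw [SimpleGraph.Walk.length_reverse] at this
      omega
    rwa [SimpleGraph.Walk.support_reverse, List.mem_reverse] at this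
  have hmem2 : u ∈ p₂.support.tail := by
    rw [← SimpleGraph.Walk.support_tail_of_not_nil p₂ h2n]
    rw [← hu2]
    exact SimpleGraph.Walk.start_mem_support _
  have hnodup := hp.support_nodup
  rw [hspec, SimpleGraph.Walk.support_append] at hnodup
  exact (List.disjoint_of_nodup_append hnodup) hmem1 hmem2

lemma induce_reachable {G : SimpleGraph V} {s : Set V} :
    ∀ {x y : V} (p : G.Walk x y) (h : ∀ z ∈ p.support, z ∈ s),
      (G.induce s).Reachable ⟨x, h x p.start_mem_support⟩ ⟨y, h y p.end_mem_support⟩ := by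
  intro x y p
  induction p with
  | nil => intro h; rfl
  | @cons a b c ha q ih =>
    intro h
    have hb : b ∈ s := h b (by simp)
    have step : (G.induce s).Adj ⟨a, h a (SimpleGraph.Walk.start_mem_support _)⟩ ⟨b, hb⟩ := by
      simp only [SimpleGraph.comap_adj, Function.Embedding.coe_subtype]
      exact ha
    refine (step.reachable).trans ?_
    have := ih (fun z hz => h z (by simp [hz]))
    exact this

end Chunk4
section Chunk5

variable {V : Type*}

lemma comap_reachable {G : SimpleGraph V} {p : V → Prop} :
    ∀ {x y : V} (q : G.Walk x y) (h : ∀ z ∈ q.support, p z),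
      (G.comap (Subtype.val : {x // p x} → V)).Reachable
        ⟨x, h x q.start_mem_support⟩ ⟨y, h y q.end_mem_support⟩ := by
  intro x y q
  induction q with
  | nil => intro h; rfl
  | @cons a b c ha q ih =>
    intro h
    have hb : p b := h b (by simp)
    have step : (G.comap (Subtype.val : {x // p x} → V)).Adj
        ⟨a, h a (SimpleGraph.Walk.start_mem_support _)⟩ ⟨b, hb⟩ := ha
    exact (step.reachable).trans (ih fun z hz => h z (by simp [hz]))

universe u

lemma tour_of_tree : ∀ (n : ℕ) {V : Type u} [Fintype V], Fintype.card V = n →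
    ∀ (h0 : 0 < n) (w : V → V → ℝ), (∀ u v, 0 ≤ w u v) → (∀ u v, w u v = w v u) →
    (∀ u, w u u = 0) → (∀ u v x, w u x ≤ w u v + w v x) →
    ∀ T : SimpleGraph V, T.IsTree →
    ∃ σ : Fin n → V, Function.Bijective σ ∧ cycleWeight w h0 σ ≤ 2 * graphWeight w T := by
  intro n
  induction n with
  | zero => intro V _ hcard h0; omega
  | succ n ih =>
    intro V _ hcard h0 w hnonneg hsymm hrefl htri T hT
    rcases Nat.eq_zero_or_pos n with rfl | hn1
    · -- card V = 1
      obtain ⟨v, hv⟩ := Fintype.card_eq_one_iff.mp hcard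
      refine ⟨fun _ => v, ⟨fun a b _ => Fin.ext (by omega), fun x => ⟨0, (hv x).symm⟩⟩, ?_⟩
      have hz : cycleWeight w h0 (fun _ => v) = 0 := by
        unfold cycleWeight; simp [hrefl]
      rw [hz]
      have := graphWeight_nonneg hnonneg T
      linarith
    haveI : NeZero n := ⟨by omega⟩
    haveI : NeZero (n + 1) := ⟨by omega⟩
    obtain ⟨v, u, hadj, huniq⟩ := exists_leaf T hT (by omega)
    have hune : u ≠ v := hadj.ne'
    set T' : SimpleGraph {x : V // x ≠ v} :=
      T.comap (Subtype.val : {x : V // x ≠ v} → V) with hT'def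
    have hembInj : Function.Injective (Subtype.val : {x : V // x ≠ v} → V) :=
      Subtype.val_injective
    have hcard' : Fintype.card {x : V // x ≠ v} = n := by
      have h1 := Fintype.card_subtype_compl (fun x : V => x = v)
      have h2 : Fintype.card {x : V // x = v} = 1 := Fintype.card_subtype_eq v
      have h3 : Fintype.card {x : V // ¬x = v} = Fintype.card {x : V // x ≠ v} := rfl
      omega
    have hT' : T'.IsTree := by
      constructor
      · rw [connected_iff]
        refine ⟨?_, ⟨⟨u, hune⟩⟩⟩
        rintro ⟨x, hx⟩ ⟨y, hy⟩
        rw [hT'def]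
        obtain ⟨p0⟩ := hT.isConnected.preconnected x y
        have hvp : v ∉ (p0.toPath : T.Walk x y).support :=
          not_mem_support_of_unique_nbr huniq hx hy _ p0.toPath.isPath
        have hall : ∀ z ∈ (p0.toPath : T.Walk x y).support, z ≠ v :=
          fun z hz heq => hvp (heq ▸ hz)
        exact comap_reachable (p0.toPath : T.Walk x y) hall
      · intro x c hc
        let hhom : T' →g T := ⟨Subtype.val, fun h => h⟩
        have hhomInj : Function.Injective ⇑hhom := fun a b hab => hembInj (by exact hab)
        exact hT.2 (c.map hhom)
          ((SimpleGraph.Walk.map_isCycle_iff_of_injective hhomInj).mpr hc)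
    set w' : {x : V // x ≠ v} → {x : V // x ≠ v} → ℝ := fun a b => w a.val b.val with hw'def
    obtain ⟨σ', hσ'bij, hσ'w⟩ := ih hcard' hn1 w' (fun a b => hnonneg _ _)
      (fun a b => hsymm _ _) (fun a => hrefl _) (fun a b c => htri _ _ _) T' hT'
    obtain ⟨j, hj⟩ := hσ'bij.2 ⟨u, hune⟩
    set last : Fin n := ⟨n - 1, by omega⟩ with hlastdef
    set cc : Fin n := j - last with hccdef
    set σ'' : Fin n → {x : V // x ≠ v} := fun i => σ' (i + cc) with hσ''def
    have hσ''bij : Function.Bijective σ'' := hσ'bij.comp (Equiv.addRight cc).bijective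
    have hlast : σ'' last = ⟨u, hune⟩ := by
      show σ' (last + cc) = _
      have h : last + cc = j := by rw [hccdef, add_comm, sub_add_cancel]
      rw [h, hj]
    have hrot : cycleWeight w' hn1 σ'' = cycleWeight w' hn1 σ' := cycleWeight_rotate hn1 σ' cc
    set g : Fin n → ℝ := fun i => w' (σ'' i) (σ'' (i + 1)) with hgdef
    have hg : cycleWeight w' hn1 σ'' = ∑ i : Fin n, g i := cycleWeight_eq hn1 σ''
    set σ : Fin (n + 1) → V :=
      fun i => if h : i.val < n then (σ'' ⟨i.val, h⟩).val else v with hσdef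
    have hσcast : ∀ i : Fin n, σ i.castSucc = (σ'' i).val := by
      intro i
      show (if h : i.val < n then (σ'' ⟨i.val, h⟩).val else v) = (σ'' i).val
      rw [dif_pos i.isLt]
    have hσlast : σ (Fin.last n) = v := by
      show (if h : n < n then _ else v) = v
      rw [dif_neg (lt_irrefl n)]
    have hσzero : σ 0 = (σ'' 0).val := by
      have h00 : ((0 : Fin (n + 1))).val < n := by
        simp only [Fin.val_zero]
        omega
      have h01 : (⟨(0 : Fin (n + 1)).val, h00⟩ : Fin n) = 0 := by
        ext
        simp
      show (if h : (0 : Fin (n+1)).val < n then (σ'' ⟨(0 : Fin (n+1)).val, h⟩).val else v)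
        = (σ'' 0).val
      rw [dif_pos h00, h01]
    -- bijectivity of σ
    have hσinj : Function.Injective σ := by
      intro a b hab
      by_cases ha : a.val < n <;> by_cases hb : b.val < n
      · rw [hσdef] at hab
        simp only [dif_pos ha, dif_pos hb] at hab
        have := hσ''bij.1 (hembInj hab)
        have := congrArg Fin.val this
        simp only at this
        ext
        exact this
      · rw [hσdef] at hab
        simp only [dif_pos ha, dif_neg hb] at hab
        exact absurd hab (σ'' ⟨a.val, ha⟩).2
      · rw [hσdef] at hab
        simp only [dif_neg ha, dif_pos hb] at hab
        exact absurd hab.symm (σ'' ⟨b.val, hb⟩).2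
      · have := a.isLt; have := b.isLt
        ext
        omega
    have hσbij : Function.Bijective σ := by
      rw [Fintype.bijective_iff_injective_and_card]
      exact ⟨hσinj, by rw [Fintype.card_fin, hcard]⟩
    -- index arithmetic
    have hnext : ∀ i : Fin n, i.val + 1 < n →
        (i.castSucc + 1 : Fin (n + 1)) = (i + 1 : Fin n).castSucc := by
      intro i h
      ext
      simp only [Fin.coe_castSucc, Fin.add_def, Fin.val_one']
      rw [Nat.add_mod_mod, Nat.add_mod_mod, Nat.mod_eq_of_lt (by omega),
        Nat.mod_eq_of_lt (by omega)]
    have hcast_last_next : ((last).castSucc + 1 : Fin (n + 1)) = Fin.last n := by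
      ext
      simp only [Fin.coe_castSucc, Fin.add_def, Fin.val_one', Fin.val_last, hlastdef]
      rw [Nat.add_mod_mod, Nat.mod_eq_of_lt (by omega)]
      omega
    have hlast_next : (Fin.last n + 1 : Fin (n + 1)) = 0 := by
      ext
      simp only [Fin.val_last, Fin.add_def, Fin.val_one', Fin.val_zero]
      rw [Nat.add_mod_mod, Nat.mod_self]
    have hlastn : (last + 1 : Fin n) = 0 := by
      ext
      simp only [Fin.add_def, Fin.val_one', Fin.val_zero, hlastdef]
      rw [Nat.add_mod_mod]
      have : n - 1 + 1 = n := by omega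
      rw [this, Nat.mod_self]
    have hglast : g last = w u (σ'' 0).val := by
      rw [hgdef]
      show w' (σ'' last) (σ'' (last + 1)) = _
      rw [hlastn, hlast]
    -- cycle weight of σ
    have hsum : cycleWeight w h0 σ
        = (∑ i ∈ Finset.univ.erase last, g i) + w u v + w v (σ'' 0).val := by
      rw [cycleWeight_eq h0 σ, Fin.sum_univ_castSucc]
      have hS2 : w (σ (Fin.last n)) (σ (Fin.last n + 1)) = w v (σ'' 0).val := by
        rw [hσlast, hlast_next, hσzero]
      have hS1 : ∑ i : Fin n, w (σ i.castSucc) (σ (i.castSucc + 1))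
          = w u v + ∑ i ∈ Finset.univ.erase last, g i := by
        rw [← Finset.add_sum_erase _ _ (Finset.mem_univ last)]
        congr 1
        · rw [hσcast, hcast_last_next, hσlast, hlast]
        · refine Finset.sum_congr rfl fun i hi => ?_
          have hine : i ≠ last := Finset.ne_of_mem_erase hi
          have hlt : i.val + 1 < n := by
            have h1 := i.isLt
            have h2 : i.val ≠ n - 1 := fun h => hine (Fin.ext h)
            omega
          rw [hσcast, hnext i hlt, hσcast]
      rw [hS1, hS2]
      ring
    -- graph weight split
    have hsplit : graphWeight w T = graphWeight w' T' + w u v := by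
      have hvb : ∀ b : V, T.Adj v b ↔ b = u := fun b => ⟨huniq b, fun h => h ▸ hadj⟩
      have hFv : (∑ b : V, if T.Adj v b then w v b else 0) = w v u := by
        have h1 : (∑ b : V, if T.Adj v b then w v b else 0)
            = ∑ b : V, if b = u then w v b else 0 :=
          Finset.sum_congr rfl fun b _ => ite_congr (propext (hvb b)) (fun _ => rfl) fun _ => rfl
        rw [h1, Finset.sum_ite_eq' Finset.univ u (fun b => w v b)]
        simp
      have hinner : ∀ a : {x : V // x ≠ v},
          (∑ b : V, if T.Adj a.val b then w a.val b else 0)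
          = (if a.val = u then w a.val v else 0)
            + ∑ b : {x : V // x ≠ v}, if T.Adj a.val b.val then w a.val b.val else 0 := by
        intro a
        rw [sum_split v (fun b => if T.Adj a.val b then w a.val b else 0)]
        have h1 : (if T.Adj a.val v then w a.val v else 0)
            = (if a.val = u then w a.val v else 0) := by
          refine ite_congr ?_ (fun _ => rfl) fun _ => rfl
          have : T.Adj a.val v ↔ a.val = u := by rw [T.adj_comm]; exact hvb a.val
          exact propext this
        rw [h1]
      have hmid : (∑ a : {x : V // x ≠ v}, if a.val = u then w a.val v else 0) = w u v := by
        have h1 : (∑ a : {x : V // x ≠ v}, if a.val = u then w a.val v else 0)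
            = ∑ a : {x : V // x ≠ v}, if a = ⟨u, hune⟩ then w a.val v else 0 := by
          refine Finset.sum_congr rfl fun a _ => ite_congr ?_ (fun _ => rfl) fun _ => rfl
          exact propext (by rw [Subtype.ext_iff])
        rw [h1, Finset.sum_ite_eq' Finset.univ (⟨u, hune⟩ : {x : V // x ≠ v})
          (fun a => w a.val v)]
        simp
      have hS : (∑ a : V, ∑ b : V, if T.Adj a b then w a b else 0)
          = (∑ a : {x : V // x ≠ v}, ∑ b : {x : V // x ≠ v},
              if T'.Adj a b then w' a b else 0) + 2 * w u v := by
        rw [sum_split v (fun a => ∑ b : V, if T.Adj a b then w a b else 0), hFv]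
        rw [Finset.sum_congr rfl fun a _ => hinner a, Finset.sum_add_distrib, hmid]
        have : (∑ a : {x : V // x ≠ v}, ∑ b : {x : V // x ≠ v},
            if T.Adj a.val b.val then w a.val b.val else 0)
            = ∑ a : {x : V // x ≠ v}, ∑ b : {x : V // x ≠ v},
              if T'.Adj a b then w' a b else 0 := by
          refine Finset.sum_congr rfl fun a _ => Finset.sum_congr rfl fun b _ => ?_
          exact ite_congr rfl (fun _ => rfl) fun _ => rfl
        rw [this, hsymm v u]
        ring
      have hgw1 : graphWeight w T
          = (∑ a : V, ∑ b : V, if T.Adj a b then w a b else 0) / 2 := rfl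
      have hgw2 : graphWeight w' T'
          = (∑ a : {x : V // x ≠ v}, ∑ b : {x : V // x ≠ v},
              if T'.Adj a b then w' a b else 0) / 2 := rfl
      rw [hgw1, hgw2, hS]
      ring
    -- put it together
    refine ⟨σ, hσbij, ?_⟩
    have hσ''sum : cycleWeight w' hn1 σ''
        = g last + ∑ i ∈ Finset.univ.erase last, g i := by
      rw [hg, ← Finset.add_sum_erase _ _ (Finset.mem_univ last)]
    have htri' : w v (σ'' 0).val ≤ w v u + w u (σ'' 0).val := htri _ _ _
    have hs0 : w u (σ'' 0).val = g last := hglast.symm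
    have hchain : cycleWeight w' hn1 σ'' ≤ 2 * graphWeight w' T' := by
      rw [hrot]; exact hσ'w
    rw [hsum, hsplit]
    have hsymm' : w v u = w u v := hsymm v u
    have := hσ''sum
    linarith [hchain, htri']

end Chunk5
/-- 2-approximation of Metric TSP via doubled spanning trees: in a complete weighted graph
on `n ≥ 2` vertices whose weights are nonnegative, symmetric, zero on the diagonal, and
satisfy the triangle inequality, there is a Hamiltonian cycle whose weight is at most
twice the minimum spanning-tree weight, and hence at most twice the optimal tour weight. -/
theorem metric_tsp_two_approximation {V : Type*} [Fintype V] {n : ℕ}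
    (hn : 2 ≤ n) (hcard : Fintype.card V = n) (w : V → V → ℝ)
    (hnonneg : ∀ u v, 0 ≤ w u v) (hsymm : ∀ u v, w u v = w v u)
    (hrefl : ∀ u, w u u = 0) (htri : ∀ u v x, w u x ≤ w u v + w v x) :
    ∃ σ : Fin n → V, Function.Bijective σ ∧
      cycleWeight w (by omega) σ ≤
        2 * sInf {x : ℝ | ∃ T : SimpleGraph V, T.IsTree ∧ x = graphWeight w T} ∧
      ∀ τ : Fin n → V, Function.Bijective τ →
        cycleWeight w (by omega) σ ≤ 2 * cycleWeight w (by omega) τ := by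
  have h0 : 0 < n := by omega
  set S : Set ℝ := {x : ℝ | ∃ T : SimpleGraph V, T.IsTree ∧ x = graphWeight w T} with hSdef
  haveI : Finite (SimpleGraph V) :=
    Finite.of_injective (fun G : SimpleGraph V => G.Adj)
      (fun G H h => by ext u v; exact iff_of_eq (congrFun (congrFun h u) v))
  have hfin : S.Finite := by
    have hsub : S ⊆ Set.range (graphWeight w) := by
      rintro x ⟨T, _, rfl⟩
      exact ⟨T, rfl⟩
    exact (Set.finite_range _).subset hsub
  obtain ⟨T₁, hT₁, _⟩ := exists_tree_le_tour hn hcard h0 w hnonneg hsymm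
    ((Fintype.equivFinOfCardEq hcard).symm) (Equiv.bijective _)
  have hne : S.Nonempty := ⟨graphWeight w T₁, T₁, hT₁, rfl⟩
  obtain ⟨T₀, hT₀, hT₀eq⟩ := hne.csInf_mem hfin
  obtain ⟨σ, hσbij, hσw⟩ := tour_of_tree n hcard h0 w hnonneg hsymm hrefl htri T₀ hT₀
  refine ⟨σ, hσbij, ?_, ?_⟩
  · show cycleWeight w h0 σ ≤ 2 * sInf S
    rw [hT₀eq]
    exact hσw
  · intro τ hτ
    show cycleWeight w h0 σ ≤ 2 * cycleWeight w h0 τ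
    obtain ⟨T, hT, hTle⟩ := exists_tree_le_tour hn hcard h0 w hnonneg hsymm τ hτ
    have h1 : sInf S ≤ graphWeight w T := csInf_le hfin.bddBelow ⟨T, hT, rfl⟩
    have h2 : cycleWeight w h0 σ ≤ 2 * sInf S := by rw [hT₀eq]; exact hσw
    linarith
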